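/- arXiv:2407.12624 — 6 statements merged into one kernel-verified Lean document; each statement's English description precedes it below -/
import Mathlib

section
/- Let α : ℝ → ℝ be a locally Lipschitz class-K function (continuous, strictly increasing, α(0) = 0). Let t₀ ∈ ℝ and let h : ℝ → ℝ be differentiable on [t₀, ∞) with h(t₀) ≥ 0. If for every t ≥ t₀ the derivative satisfies deriv h t ≥ -α(h t), then h(t) ≥ 0 for all t ≥ t₀. -/
/-- Comparison principle for zeroing control barrier functions:
if `α` is a locally Lipschitz class-K function and `h` is differentiable on `[t₀, ∞)`
with `h t₀ ≥ 0` and `deriv h t ≥ -α (h t)` for all `t ≥ t₀`, then `h t ≥ 0` for all `t ≥ t₀`. -/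
theorem cbf_comparison_nonneg
    (α : ℝ → ℝ) (hα_lip : LocallyLipschitz α) (hα_cont : Continuous α)
    (hα_mono : StrictMono α) (hα_zero : α 0 = 0)
    (t₀ : ℝ) (h : ℝ → ℝ)
    (h_diff : ∀ t ∈ Set.Ici t₀, DifferentiableAt ℝ h t)
    (h_init : 0 ≤ h t₀)
    (h_ineq : ∀ t ≥ t₀, deriv h t ≥ -α (h t)) :
    ∀ t ≥ t₀, 0 ≤ h t := by
  intro t₁ ht₁
  by_contra hneg
  push_neg at hneg
  have hcont : ContinuousOn h (Set.Ici t₀) :=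
    fun t ht => (h_diff t ht).continuousAt.continuousWithinAt
  -- the set of times in [t₀, t₁] where h is nonnegative
  set S : Set ℝ := Set.Icc t₀ t₁ ∩ h ⁻¹' Set.Ici 0 with hS
  have hScl : IsClosed S :=
    (hcont.mono (Set.Icc_subset_Ici_self)).preimage_isClosed_of_isClosed
      isClosed_Icc isClosed_Ici
  have hSne : S.Nonempty := ⟨t₀, ⟨le_rfl, ht₁⟩, h_init⟩
  have hSbdd : BddAbove S := ⟨t₁, fun x hx => hx.1.2⟩
  set s := sSup S with hs
  have hsS : s ∈ S := hScl.csSup_mem hSne hSbdd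
  have hs_ge : t₀ ≤ s := hsS.1.1
  have hs_le : s ≤ t₁ := hsS.1.2
  have hs_nonneg : 0 ≤ h s := hsS.2
  have hslt : s < t₁ := lt_of_le_of_ne hs_le (fun e => absurd (e ▸ hs_nonneg) (not_le.2 hneg))
  -- on (s, t₁], h is negative, hence deriv h > 0 there
  have hneg' : ∀ x ∈ Set.Ioc s t₁, h x < 0 := by
    intro x hx
    by_contra hx0
    push_neg at hx0
    have : x ∈ S := ⟨⟨hs_ge.trans hx.1.le, hx.2⟩, hx0⟩
    exact absurd (le_csSup hSbdd this) (not_le.2 hx.1)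
  have hmono : MonotoneOn h (Set.Icc s t₁) := by
    apply monotoneOn_of_deriv_nonneg (convex_Icc s t₁)
    · exact hcont.mono ((Set.Icc_subset_Icc_left hs_ge).trans Set.Icc_subset_Ici_self)
    · intro x hx
      rw [interior_Icc] at hx
      exact (h_diff x (hs_ge.trans hx.1.le)).differentiableWithinAt
    · intro x hx
      rw [interior_Icc] at hx
      have hx0 : h x < 0 := hneg' x ⟨hx.1, hx.2.le⟩
      have : α (h x) < 0 := hα_zero ▸ hα_mono hx0
      have := h_ineq x (hs_ge.trans hx.1.le)
      linarith
  have : h s ≤ h t₁ :=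
    hmono ⟨le_rfl, hs_le⟩ ⟨hs_le, le_rfl⟩ hs_le
  linarith
end

section
/- Let E and U be finite-dimensional real normed vector spaces, F : E × U → E a map, u : ℝ → U, and x : ℝ → E a curve such that for every t ≥ t₀, x has derivative F(x t, u t) at t. Let h : E → ℝ be differentiable and let α : ℝ → ℝ be a locally Lipschitz class-K function (continuous, strictly increasing, α(0) = 0). Assume that for every t ≥ t₀, (fderiv ℝ h (x t)) (F (x t, u t)) ≥ -α(h (x t)), and that h(x t₀) ≥ 0. Then h(x t) ≥ 0 for all t ≥ t₀; that is, the safe set C = {y ∈ E : h(y) ≥ 0} is forward invariant along the trajectory x. -/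
open Set

/-- Forward invariance of the safe set `C = {y | h y ≥ 0}` along a trajectory of the
control system `ẋ = F(x, u)` under the zeroing CBF condition. -/
theorem cbf_forward_invariance
    {E U : Type*} [NormedAddCommGroup E] [NormedSpace ℝ E] [FiniteDimensional ℝ E]
    [NormedAddCommGroup U] [NormedSpace ℝ U] [FiniteDimensional ℝ U]
    (F : E × U → E) (u : ℝ → U) (x : ℝ → E) (t₀ : ℝ)
    (hx : ∀ t ≥ t₀, HasDerivAt x (F (x t, u t)) t)
    (h : E → ℝ) (hh : Differentiable ℝ h)
    (α : ℝ → ℝ) (hα_lip : LocallyLipschitz α) (hα_cont : Continuous α)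
    (hα_mono : StrictMono α) (hα_zero : α 0 = 0)
    (h_cbf : ∀ t ≥ t₀, (fderiv ℝ h (x t)) (F (x t, u t)) ≥ -α (h (x t)))
    (h_init : 0 ≤ h (x t₀)) :
    ∀ t ≥ t₀, x t ∈ {y : E | 0 ≤ h y} := by
  intro t ht
  simp only [mem_setOf_eq]
  set f : ℝ → ℝ := fun s => -h (x s) with hf_def
  set f' : ℝ → ℝ := fun s => -((fderiv ℝ h (x s)) (F (x s, u s))) with hf'_def
  have hderiv : ∀ s, t₀ ≤ s → HasDerivAt f (f' s) s := by
    intro s hs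
    have h1 : HasDerivAt (fun r => h (x r)) ((fderiv ℝ h (x s)) (F (x s, u s))) s :=
      ((hh (x s)).hasFDerivAt).comp_hasDerivAt s (hx s hs)
    exact h1.neg
  have hcont : ContinuousOn f (Icc t₀ t) := fun s hs =>
    (hderiv s hs.1).continuousAt.continuousWithinAt
  -- For every ε > 0, f t ≤ ε * (1 + t - t₀)
  have key : ∀ ε > 0, f t ≤ ε * (1 + t - t₀) := by
    intro ε hε
    set B : ℝ → ℝ := fun s => ε * (1 + s - t₀) with hB_def
    have hB' : ∀ s, HasDerivAt B ε s := by
      intro s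
      have : HasDerivAt (fun s : ℝ => 1 + s - t₀) 1 s := by
        simpa using (((hasDerivAt_id s).const_add 1).sub_const t₀)
      simpa using this.const_mul ε
    have := image_le_of_liminf_slope_right_lt_deriv_boundary
      (f := f) (f' := f') (a := t₀) (b := t) hcont
      (fun s hs r hr => (hderiv s hs.1).hasDerivWithinAt.liminf_right_slope_le hr)
      (B := B) (B' := fun _ => ε)
      (by simp [hB_def, hf_def]; linarith)
      hB'
      (by
        intro s hs hfB
        -- f s = B s > 0, so h (x s) < 0, so f' s ≤ α (h (x s)) < 0 < ε
        have hBpos : 0 < B s := by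
          have : (0:ℝ) < 1 + s - t₀ := by linarith [hs.1]
          positivity
        have hneg : h (x s) < 0 := by
          have : f s > 0 := hfB ▸ hBpos
          simp only [hf_def] at this; linarith
        have h1 : f' s ≤ α (h (x s)) := by
          have := h_cbf s hs.1
          simp only [hf'_def]; linarith
        have h2 : α (h (x s)) < 0 := hα_zero ▸ hα_mono hneg
        linarith)
    have htmem : t ∈ Icc t₀ t := ⟨ht, le_refl t⟩
    simpa [hB_def] using this htmem
  -- conclude: -h (x t) ≤ 0
  by_contra hcon
  push_neg at hcon
  have hc : (0:ℝ) < 1 + t - t₀ := by linarith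
  have hd : (0:ℝ) < -h (x t) := by linarith
  have := key ((-h (x t)) / (2 * (1 + t - t₀))) (by positivity)
  have : -h (x t) ≤ (-h (x t)) / 2 := by
    rw [div_mul_eq_mul_div, mul_comm] at this
    calc -h (x t) = f t := rfl
      _ ≤ _ := this
      _ = (-h (x t)) / 2 := by field_simp
  linarith
end

section
/- Let S be a finite-dimensional real normed vector space, let ι be a finite index type, and for each k ∈ ι let H_k : S → ℝ be a differentiable function. Let α₁ : ℝ → ℝ be a locally Lipschitz class-K function (continuous, strictly increasing, α₁(0) = 0). Let s : ℝ → S be a curve that is differentiable for t ≥ t₀, and suppose that for every k ∈ ι and every t ≥ t₀, (fderiv ℝ H_k (s t)) (deriv s t) ≥ -α₁(H_k (s t)). If H_k(s t₀) ≥ 0 for every k ∈ ι, then H_k(s t) ≥ 0 for all k ∈ ι and all t ≥ t₀; that is, the set C_h = ⋂_{k∈ι} {σ ∈ S : H_k(σ) ≥ 0} is forward invariant along s. -/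
/-- Lemma 1 (FITS): forward invariance of the safe set
`C_h = ⋂ k, {σ | H k σ ≥ 0}` in trajectory configuration space. -/
theorem fits_safe_set_forward_invariance
    {S : Type*} [NormedAddCommGroup S] [NormedSpace ℝ S] [FiniteDimensional ℝ S]
    {ι : Type*} [Fintype ι]
    (H : ι → S → ℝ) (hH : ∀ k, Differentiable ℝ (H k))
    (α₁ : ℝ → ℝ) (hα_lip : LocallyLipschitz α₁) (hα_cont : Continuous α₁)
    (hα_mono : StrictMono α₁) (hα_zero : α₁ 0 = 0)
    (s : ℝ → S) (t₀ : ℝ)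
    (hs_diff : ∀ t ≥ t₀, DifferentiableAt ℝ s t)
    (h_cbf : ∀ k, ∀ t ≥ t₀, (fderiv ℝ (H k) (s t)) (deriv s t) ≥ -α₁ (H k (s t)))
    (h_init : ∀ k, 0 ≤ H k (s t₀)) :
    ∀ t ≥ t₀, s t ∈ ⋂ k, {σ : S | 0 ≤ H k σ} := by
  intro t₁ ht₁
  rw [Set.mem_iInter]
  intro k
  show 0 ≤ H k (s t₁)
  by_contra hneg
  push_neg at hneg
  set y : ℝ → ℝ := fun t => H k (s t) with hy
  -- derivative of y at points t ≥ t₀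
  have hyd : ∀ t ≥ t₀, HasDerivAt y ((fderiv ℝ (H k) (s t)) (deriv s t)) t := by
    intro t ht
    exact ((hH k).differentiableAt.hasFDerivAt).comp_hasDerivAt t
      (hs_diff t ht).hasDerivAt
  have hycont : ∀ t ≥ t₀, ContinuousAt y t := fun t ht => (hyd t ht).continuousAt
  -- the set of safe times in [t₀, t₁]
  set A : Set ℝ := Set.Icc t₀ t₁ ∩ y ⁻¹' Set.Ici 0 with hA
  have hAne : A.Nonempty := ⟨t₀, ⟨le_refl _, ht₁⟩, h_init k⟩
  have hAbdd : BddAbove A := ⟨t₁, fun x hx => hx.1.2⟩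
  have hAclosed : IsClosed A := by
    have hcont : ContinuousOn y (Set.Icc t₀ t₁) := fun x hx =>
      (hycont x hx.1).continuousWithinAt
    exact hcont.preimage_isClosed_of_isClosed isClosed_Icc isClosed_Ici
  set c : ℝ := sSup A with hc
  have hcA : c ∈ A := hAclosed.csSup_mem hAne hAbdd
  have hct₀ : t₀ ≤ c := hcA.1.1
  have hct₁ : c < t₁ := lt_of_le_of_ne hcA.1.2 (by
    intro h
    have : (0:ℝ) ≤ y t₁ := h ▸ hcA.2
    exact absurd this (not_le.mpr hneg))
  have hyc : 0 ≤ y c := hcA.2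
  -- y < 0 on (c, t₁]
  have hlt : ∀ x ∈ Set.Ioc c t₁, y x < 0 := by
    intro x hx
    by_contra hge
    push_neg at hge
    have hxA : x ∈ A := ⟨⟨le_trans hct₀ hx.1.le, hx.2⟩, hge⟩
    exact absurd (le_csSup hAbdd hxA) (not_le.mpr hx.1)
  -- y is strictly monotone on [c, t₁]
  have hmono : StrictMonoOn y (Set.Icc c t₁) := by
    apply strictMonoOn_of_deriv_pos (convex_Icc c t₁)
    · intro x hx
      exact (hycont x (le_trans hct₀ hx.1)).continuousWithinAt
    · intro x hx
      rw [interior_Icc] at hx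
      have hxt₀ : t₀ ≤ x := le_trans hct₀ hx.1.le
      have hyx : y x < 0 := hlt x ⟨hx.1, hx.2.le⟩
      have hderiv : deriv y x = (fderiv ℝ (H k) (s x)) (deriv s x) :=
        (hyd x hxt₀).deriv
      have h1 : α₁ (y x) < 0 := by
        have := hα_mono hyx
        rwa [hα_zero] at this
      have h2 : deriv y x ≥ -α₁ (y x) := hderiv ▸ h_cbf k x hxt₀
      linarith
  have : y c < y t₁ :=
    hmono ⟨le_refl _, hct₁.le⟩ ⟨hct₁.le, le_refl _⟩ hct₁
  linarith
end

section
/- Let S be a finite-dimensional real normed vector space, let ι and κ be finite index types, and let H_k : S → ℝ (k ∈ ι) and G_j : S → ℝ (j ∈ κ) be differentiable functions. Let α₁, α₂ : ℝ → ℝ be locally Lipschitz class-K functions (continuous, strictly increasing, vanishing at 0). Let s : ℝ → S be differentiable for t ≥ t₀ and suppose that for all t ≥ t₀: (fderiv ℝ H_k (s t)) (deriv s t) ≥ -α₁(H_k (s t)) for every k ∈ ι, and (fderiv ℝ G_j (s t)) (deriv s t) ≥ -α₂(G_j (s t)) for every j ∈ κ. If s(t₀) lies in the intersection C = (⋂_{k}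 {H_k ≥ 0}) ∩ (⋂_{j} {G_j ≥ 0}), then s(t) ∈ C for all t ≥ t₀, i.e., all inequality constraints H_k(s t) ≥ 0 and G_j(s t) ≥ 0 hold at all times t ≥ t₀. -/
/-- Scalar comparison lemma: if `y` is differentiable for `t ≥ t₀`, its derivative
satisfies `y' t ≥ -α (y t)` there for a strictly increasing `α` with `α 0 = 0`,
and `y t₀ ≥ 0`, then `y t ≥ 0` for all `t ≥ t₀`. -/
lemma nonneg_forward_invariance (α : ℝ → ℝ) (hmono : StrictMono α) (hzero : α 0 = 0)
    (y : ℝ → ℝ) (t₀ : ℝ)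
    (hdiff : ∀ t ≥ t₀, DifferentiableAt ℝ y t)
    (hineq : ∀ t ≥ t₀, deriv y t ≥ -α (y t))
    (h0 : 0 ≤ y t₀) : ∀ t ≥ t₀, 0 ≤ y t := by
  intro t₁ ht₁
  by_contra hlt
  push_neg at hlt
  set A : Set ℝ := Set.Icc t₀ t₁ ∩ y ⁻¹' Set.Ici 0 with hA
  have hyc : ContinuousOn y (Set.Icc t₀ t₁) := fun x hx =>
    (hdiff x hx.1).continuousAt.continuousWithinAt
  have hAne : A.Nonempty := ⟨t₀, ⟨le_refl _, ht₁⟩, h0⟩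
  have hAbdd : BddAbove A := ⟨t₁, fun x hx => hx.1.2⟩
  have hAclosed : IsClosed A :=
    hyc.preimage_isClosed_of_isClosed isClosed_Icc isClosed_Ici
  set τ := sSup A with hτ
  have hτA : τ ∈ A := hAclosed.csSup_mem hAne hAbdd
  have hτIcc : τ ∈ Set.Icc t₀ t₁ := hτA.1
  have hyτ : 0 ≤ y τ := hτA.2
  have hτlt : τ < t₁ := lt_of_le_of_ne hτIcc.2 (by
    intro h; rw [h] at hyτ; exact absurd hyτ (not_le.mpr hlt))
  -- On (τ, t₁), y is negative, hence its derivative is positive.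
  have hneg : ∀ x ∈ Set.Ioo τ t₁, y x < 0 := by
    intro x hx
    by_contra hx0
    push_neg at hx0
    have : x ∈ A := ⟨⟨le_trans hτIcc.1 hx.1.le, hx.2.le⟩, hx0⟩
    exact absurd (le_csSup hAbdd this) (not_le.mpr hx.1)
  have hmonoOn : StrictMonoOn y (Set.Icc τ t₁) := by
    apply strictMonoOn_of_deriv_pos (convex_Icc τ t₁)
      (hyc.mono (Set.Icc_subset_Icc_left hτIcc.1))
    intro x hx
    rw [interior_Icc] at hx
    have hxt₀ : t₀ ≤ x := le_trans hτIcc.1 hx.1.le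
    have hyx : y x < 0 := hneg x hx
    have : α (y x) < 0 := hzero ▸ hmono hyx
    have := hineq x hxt₀
    linarith
  have : y τ < y t₁ :=
    hmonoOn ⟨le_refl _, hτlt.le⟩ ⟨hτlt.le, le_refl _⟩ hτlt
  linarith

/-- Theorem 2 (FITS): simultaneous forward invariance of the safety sets `{H k ≥ 0}`
and the actuation constraint sets `{G j ≥ 0}` along the trajectory state `s`. -/
theorem fits_safety_and_actuation_invariance
    {S : Type*} [NormedAddCommGroup S] [NormedSpace ℝ S] [FiniteDimensional ℝ S]
    {ι κ : Type*} [Fintype ι] [Fintype κ]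
    (H : ι → S → ℝ) (hH : ∀ k, Differentiable ℝ (H k))
    (G : κ → S → ℝ) (hG : ∀ j, Differentiable ℝ (G j))
    (α₁ α₂ : ℝ → ℝ)
    (hα₁_lip : LocallyLipschitz α₁) (hα₁_cont : Continuous α₁)
    (hα₁_mono : StrictMono α₁) (hα₁_zero : α₁ 0 = 0)
    (hα₂_lip : LocallyLipschitz α₂) (hα₂_cont : Continuous α₂)
    (hα₂_mono : StrictMono α₂) (hα₂_zero : α₂ 0 = 0)
    (s : ℝ → S) (t₀ : ℝ)
    (hs_diff : ∀ t ≥ t₀, DifferentiableAt ℝ s t)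
    (h_cbfH : ∀ k, ∀ t ≥ t₀, (fderiv ℝ (H k) (s t)) (deriv s t) ≥ -α₁ (H k (s t)))
    (h_cbfG : ∀ j, ∀ t ≥ t₀, (fderiv ℝ (G j) (s t)) (deriv s t) ≥ -α₂ (G j (s t)))
    (h_init : s t₀ ∈ (⋂ k, {σ : S | 0 ≤ H k σ}) ∩ (⋂ j, {σ : S | 0 ≤ G j σ})) :
    ∀ t ≥ t₀, s t ∈ (⋂ k, {σ : S | 0 ≤ H k σ}) ∩ (⋂ j, {σ : S | 0 ≤ G j σ}) := by
  obtain ⟨hIH, hIG⟩ := h_init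
  simp only [Set.mem_inter_iff, Set.mem_iInter, Set.mem_setOf_eq] at hIH hIG ⊢
  have key : ∀ (F : S → ℝ) (α : ℝ → ℝ), Differentiable ℝ F → StrictMono α → α 0 = 0 →
      (∀ t ≥ t₀, (fderiv ℝ F (s t)) (deriv s t) ≥ -α (F (s t))) →
      0 ≤ F (s t₀) → ∀ t ≥ t₀, 0 ≤ F (s t) := by
    intro F α hF hαm hα0 hcbf h0
    have hder : ∀ t ≥ t₀, HasDerivAt (fun t => F (s t))
        ((fderiv ℝ F (s t)) (deriv s t)) t := fun t ht =>
      (hF (s t)).hasFDerivAt.comp_hasDerivAt t (hs_diff t ht).hasDerivAt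
    exact nonneg_forward_invariance α hαm hα0 (fun t => F (s t)) t₀
      (fun t ht => (hder t ht).differentiableAt)
      (fun t ht => (hder t ht).deriv ▸ hcbf t ht) h0
  exact fun t ht =>
    ⟨fun k => key (H k) α₁ (hH k) hα₁_mono hα₁_zero (h_cbfH k) (hIH k) t ht,
     fun j => key (G j) α₂ (hG j) hα₂_mono hα₂_zero (h_cbfG j) (hIG j) t ht⟩
end

section
/- Let E be a finite-dimensional real inner product space, let K be a finite index type, and let a : K → E and b : K → ℝ. Then the system of linear inequalities ⟨a_k, v⟩ + b_k ≥ 0 for all k ∈ K has a solution v ∈ E if and only if for every λ : K → ℝ with λ_k ≥ 0 for all k, the implication holds: if ∑_{k} λ_k • a_k = 0 then ∑_{k} λ_k · b_k ≥ 0. -/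
open scoped RealInnerProductSpace

section Cone

variable {F : Type*} [NormedAddCommGroup F] [NormedSpace ℝ F] [FiniteDimensional ℝ F]
variable {ι : Type*} [Fintype ι]

open Classical in
/-- The cone of nonnegative combinations of a finite family of vectors. -/
noncomputable def nnCone (c : ι → F) : Set F :=
  {x | ∃ lam : ι → ℝ, (∀ i, 0 ≤ lam i) ∧ ∑ i, lam i • c i = x}

lemma mem_nnCone {c : ι → F} {lam : ι → ℝ} (h : ∀ i, 0 ≤ lam i) :
    ∑ i, lam i • c i ∈ nnCone c := ⟨lam, h, rfl⟩

open Classical in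
/-- Conic Carathéodory: any nonnegative combination can be rewritten as a nonnegative
combination supported on a linearly independent subfamily. -/
lemma caratheodory_cone (c : ι → F) :
    ∀ n (lam : ι → ℝ), (Finset.univ.filter fun i => lam i ≠ 0).card ≤ n →
      (∀ i, 0 ≤ lam i) →
      ∃ t : Finset ι, LinearIndependent ℝ (fun i : t => c i) ∧
        ∃ mu : ι → ℝ, (∀ i, 0 ≤ mu i) ∧ (∀ i ∉ t, mu i = 0) ∧
          ∑ i, mu i • c i = ∑ i, lam i • c i := by
  intro n
  induction n with
  | zero =>
    intro lam hcard hlam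
    refine ⟨∅, linearIndependent_empty_type, lam, hlam, ?_, rfl⟩
    intro i _
    by_contra h
    have : i ∈ Finset.univ.filter fun i => lam i ≠ 0 := by
      simp [h]
    simpa using (Finset.card_pos.mpr ⟨i, this⟩).trans_le hcard
  | succ n ih =>
    intro lam hcard hlam
    set t : Finset ι := Finset.univ.filter fun i => lam i ≠ 0 with ht
    by_cases hli : LinearIndependent ℝ (fun i : t => c i)
    · refine ⟨t, hli, lam, hlam, ?_, rfl⟩
      intro i hi
      by_contra h
      exact hi (by simp [ht, h])
    · obtain ⟨g, hg0, j, hgj⟩ := Fintype.not_linearIndependent_iff.mp hli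
      -- extend g to ι by zero
      set d : ι → ℝ := fun i => if h : i ∈ t then g ⟨i, h⟩ else 0 with hd
      have hdsum : ∑ i, d i • c i = 0 := by
        rw [← Finset.sum_filter_of_ne (p := fun i => i ∈ t)
          (by intro i _ hne; by_contra h; exact hne (by simp [hd, h]))]
        rw [show (Finset.univ.filter fun i => i ∈ t) = t by
          ext i; simp]
        rw [← Finset.sum_attach t (fun i => d i • c i)]
        calc ∑ i ∈ t.attach, d i.1 • c i.1 = ∑ i ∈ t.attach, g i • c i.1 := by
              refine Finset.sum_congr rfl fun i _ => ?_
              simp [hd, i.2]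
          _ = 0 := hg0
      have hdt : ∀ i ∉ t, d i = 0 := fun i hi => by simp [hd, hi]
      -- WLOG some positive entry
      have key : ∀ d : ι → ℝ, (∑ i, d i • c i = 0) → (∀ i ∉ t, d i = 0) →
          (∃ i, 0 < d i) →
          ∃ t' : Finset ι, LinearIndependent ℝ (fun i : t' => c i) ∧
            ∃ mu : ι → ℝ, (∀ i, 0 ≤ mu i) ∧ (∀ i ∉ t', mu i = 0) ∧
              ∑ i, mu i • c i = ∑ i, lam i • c i := by
        intro d hdsum hdt ⟨i₁, hi₁⟩
        set P : Finset ι := Finset.univ.filter fun i => 0 < d i with hP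
        have hPne : P.Nonempty := ⟨i₁, by simp [hP, hi₁]⟩
        obtain ⟨i₀, hi₀P, hi₀min⟩ := P.exists_min_image (fun i => lam i / d i) hPne
        have hdi₀ : 0 < d i₀ := by simpa [hP] using hi₀P
        set r : ℝ := lam i₀ / d i₀ with hr
        have hrnn : 0 ≤ r := div_nonneg (hlam i₀) hdi₀.le
        set lam' : ι → ℝ := fun i => lam i - r * d i with hlam'
        have hlam'nn : ∀ i, 0 ≤ lam' i := by
          intro i
          rcases le_or_gt (d i) 0 with h | h
          · have : r * d i ≤ 0 := mul_nonpos_of_nonneg_of_nonpos hrnn h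
            simp only [hlam']
            linarith [hlam i]
          · have hiP : i ∈ P := by simp [hP, h]
            have := hi₀min i hiP
            have : r * d i ≤ lam i := by
              rw [hr]
              calc lam i₀ / d i₀ * d i ≤ lam i / d i * d i := by
                    exact mul_le_mul_of_nonneg_right this h.le
                _ = lam i := div_mul_cancel₀ _ h.ne'
            simp only [hlam']
            linarith
        have hsum' : ∑ i, lam' i • c i = ∑ i, lam i • c i := by
          simp only [hlam', sub_smul, mul_smul]
          rw [Finset.sum_sub_distrib, ← Finset.smul_sum, hdsum, smul_zero, sub_zero]
        have hsupp' : (Finset.univ.filter fun i => lam' i ≠ 0) ⊆ t.erase i₀ := by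
          intro i hi
          simp only [Finset.mem_filter] at hi
          rcases hi with ⟨-, hine⟩
          have hit : i ∈ t := by
            by_contra h
            have h1 : lam i = 0 := by
              by_contra h2; exact h (by simp [ht, h2])
            have h2 : d i = 0 := hdt i h
            exact hine (by simp [hlam', h1, h2])
          refine Finset.mem_erase.mpr ⟨?_, hit⟩
          intro h
          subst h
          exact hine (by simp [hlam', hr, div_mul_cancel₀ _ hdi₀.ne'])
        have hi₀t : i₀ ∈ t := by
          by_contra h
          exact absurd (hdt i₀ h) hdi₀.ne'
        have hcard' : (Finset.univ.filter fun i => lam' i ≠ 0).card ≤ n := by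
          calc (Finset.univ.filter fun i => lam' i ≠ 0).card
              ≤ (t.erase i₀).card := Finset.card_le_card hsupp'
            _ = t.card - 1 := Finset.card_erase_of_mem hi₀t
            _ ≤ (n + 1) - 1 := by
                exact Nat.sub_le_sub_right hcard 1
            _ = n := rfl
        obtain ⟨t', h1, mu, h2, h3, h4⟩ := ih lam' hcard' hlam'nn
        exact ⟨t', h1, mu, h2, h3, h4.trans hsum'⟩
      rcases Classical.em (∃ i, 0 < d i) with h | h
      · exact key d hdsum hdt h
      · refine key (fun i => -d i)
          (by simp only [neg_smul, Finset.sum_neg_distrib, hdsum, neg_zero]) 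
          (fun i hi => by simp [hdt i hi]) ?_
        push_neg at h
        refine ⟨j, ?_⟩
        have hdj : d j ≠ 0 := by simpa [hd, j.2] using hgj
        have := h j
        cases (lt_or_gt_of_ne hdj) with
        | inl hlt => simpa using hlt
        | inr hgt => exact absurd hgt (not_lt.mpr (h j))
  
lemma isClosed_nnCone (c : ι → F) : IsClosed (nnCone c) := by
  classical
  -- nnCone is the union over linearly independent subfamilies of their (closed) cones
  have : nnCone c = ⋃ t : {t : Finset ι // LinearIndependent ℝ (fun i : t => c i)},
      (fun mu : (t.1 : Finset ι) → ℝ => ∑ i, mu i • c i.1) ''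
        {mu | ∀ i, 0 ≤ mu i} := by
    ext x
    constructor
    · rintro ⟨lam, hlam, rfl⟩
      obtain ⟨t, hli, mu, hmu, hmusupp, hmusum⟩ :=
        caratheodory_cone c _ lam le_rfl hlam
      refine Set.mem_iUnion.mpr ⟨⟨t, hli⟩, ⟨fun i => mu i.1, fun i => hmu i.1, ?_⟩⟩
      show ∑ i : (t : Finset ι), mu i.1 • c i.1 = _
      rw [Finset.sum_coe_sort t (fun i => mu i • c i), ← hmusum]
      exact Finset.sum_subset (Finset.subset_univ t)
        (fun i _ hi => by rw [hmusupp i hi, zero_smul])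
    · intro hx
      obtain ⟨⟨t, hli⟩, mu, hmu, rfl⟩ := Set.mem_iUnion.mp hx
      refine ⟨fun i => if h : i ∈ t then mu ⟨i, h⟩ else 0, ?_, ?_⟩
      · intro i; by_cases h : i ∈ t <;> simp [h, hmu _]
      · rw [← Finset.sum_filter_of_ne (p := fun i => i ∈ t)
          (by intro i _ hne; by_contra h; exact hne (by simp [h]))]
        rw [show (Finset.univ.filter fun i => i ∈ t) = t by ext i; simp]
        rw [← Finset.sum_attach t (fun i => (if h : i ∈ t then mu ⟨i, h⟩ else 0) • c i)]
        exact Finset.sum_congr rfl fun i _ => by simp [i.2]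
  rw [this]
  refine isClosed_iUnion_of_finite fun t => ?_
  set L : ((t.1 : Finset ι) → ℝ) →ₗ[ℝ] F :=
    { toFun := fun mu => ∑ i, mu i • c i.1
      map_add' := by intro x y; simp [add_smul, Finset.sum_add_distrib]
      map_smul' := by intro r x; simp [mul_smul, Finset.smul_sum] } with hL
  have hker : LinearMap.ker L = ⊥ := by
    rw [LinearMap.ker_eq_bot']
    intro m hm
    have := Fintype.linearIndependent_iff.mp t.2 m hm
    funext i; exact this i
  have hemb := LinearMap.isClosedEmbedding_of_injective (𝕜 := ℝ) hker
  have horth : IsClosed {mu : (t.1 : Finset ι) → ℝ | ∀ i, 0 ≤ mu i} := by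
    have : {mu : (t.1 : Finset ι) → ℝ | ∀ i, 0 ≤ mu i} =
        ⋂ i, {mu | 0 ≤ mu i} := by ext mu; simp [Set.mem_iInter]
    rw [this]
    exact isClosed_iInter fun i =>
      isClosed_le continuous_const (continuous_apply i)
  exact hemb.isClosedMap _ horth

lemma convex_nnCone (c : ι → F) : Convex ℝ (nnCone c) := by
  rintro x ⟨lam, hlam, rfl⟩ y ⟨mu, hmu, rfl⟩ p q hp hq _
  refine ⟨fun i => p * lam i + q * mu i,
    fun i => add_nonneg (mul_nonneg hp (hlam i)) (mul_nonneg hq (hmu i)), ?_⟩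
  simp only [add_smul, mul_smul, Finset.sum_add_distrib, ← Finset.smul_sum]

lemma smul_mem_nnCone {c : ι → F} {x : F} (hx : x ∈ nnCone c) {s : ℝ} (hs : 0 ≤ s) :
    s • x ∈ nnCone c := by
  obtain ⟨lam, hlam, rfl⟩ := hx
  exact ⟨fun i => s * lam i, fun i => mul_nonneg hs (hlam i),
    by simp [mul_smul, Finset.smul_sum]⟩

lemma zero_mem_nnCone (c : ι → F) : (0 : F) ∈ nnCone c :=
  ⟨fun _ => 0, fun _ => le_rfl, by simp⟩

lemma single_mem_nnCone [DecidableEq ι] (c : ι → F) (i₀ : ι) : c i₀ ∈ nnCone c := by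
  refine ⟨fun i => if i = i₀ then 1 else 0, fun i => by positivity, ?_⟩
  simp [ite_smul]

end Cone

/-- Farkas-type feasibility characterization underlying Theorem 3 (feasibility of the FITS QP):
the linear inequality system `⟪a k, v⟫ + b k ≥ 0` is feasible iff every nonnegative combination
of the gradients `a k` summing to zero has nonnegative combined offset. -/
theorem fits_qp_feasibility_iff
    {E : Type*} [NormedAddCommGroup E] [InnerProductSpace ℝ E] [FiniteDimensional ℝ E]
    {K : Type*} [Fintype K] (a : K → E) (b : K → ℝ) :
    (∃ v : E, ∀ k, ⟪a k, v⟫ + b k ≥ 0) ↔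
      (∀ lam : K → ℝ, (∀ k, 0 ≤ lam k) →
        (∑ k, lam k • a k = 0 → ∑ k, lam k * b k ≥ 0)) := by
  classical
  constructor
  · rintro ⟨v, hv⟩ lam hlam hsum
    have h1 : ∑ k, lam k * (⟪a k, v⟫ + b k) ≥ 0 :=
      Finset.sum_nonneg fun k _ => mul_nonneg (hlam k) (hv k)
    have h2 : ∑ k, lam k * ⟪a k, v⟫ = 0 := by
      have : ∑ k, lam k * ⟪a k, v⟫ = ⟪∑ k, lam k • a k, v⟫ := by
        rw [sum_inner]
        exact Finset.sum_congr rfl fun k _ => (real_inner_smul_left _ _ _).symm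
      rw [this, hsum, inner_zero_left]
    have : ∑ k, lam k * (⟪a k, v⟫ + b k) = ∑ k, lam k * ⟪a k, v⟫ + ∑ k, lam k * b k := by
      rw [← Finset.sum_add_distrib]
      exact Finset.sum_congr rfl fun k _ => by ring
    rw [this, h2, zero_add] at h1
    exact h1
  · intro hfark
    -- work in E × ℝ with generators (a k, b k) and (0, 1)
    set c : Option K → E × ℝ := fun i => Option.elim i ((0 : E), (1 : ℝ))
      (fun k => (a k, b k)) with hc
    have hx0 : ((0 : E), (-1 : ℝ)) ∉ nnCone c := by
      rintro ⟨lam, hlam, hsum⟩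
      rw [Fintype.sum_option] at hsum
      have h1 : (lam none • c none + ∑ k, lam (some k) • c (some k)).1 = (0 : E) :=
        congrArg Prod.fst hsum
      have h2 : (lam none • c none + ∑ k, lam (some k) • c (some k)).2 = (-1 : ℝ) :=
        congrArg Prod.snd hsum
      simp only [hc, Option.elim, Prod.fst_add, Prod.snd_add, Prod.fst_sum, Prod.snd_sum,
        Prod.smul_mk, smul_eq_mul, smul_zero, mul_one, zero_add] at h1 h2
      have ha0 : ∑ k, lam (some k) • a k = 0 := by
        simpa using h1
      have hb0 : ∑ k, lam (some k) * b k ≥ 0 :=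
        hfark (fun k => lam (some k)) (fun k => hlam (some k)) ha0
      have : lam none + ∑ k, lam (some k) * b k = -1 := by
        simpa using h2
      have := hlam none
      linarith
    obtain ⟨f, u, hfu, hux⟩ := geometric_hahn_banach_closed_point
      (convex_nnCone c) (isClosed_nnCone c) hx0
    have hu0 : 0 < u := by
      have := hfu 0 (zero_mem_nnCone c)
      simpa using this
    have hfle : ∀ x ∈ nnCone c, f x ≤ 0 := by
      intro x hx
      by_contra h
      push_neg at h
      have hmem : ((u + 1) / f x) • x ∈ nnCone c :=
        smul_mem_nnCone hx (by positivity)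
      have := hfu _ hmem
      rw [map_smul, smul_eq_mul, div_mul_cancel₀ _ h.ne'] at this
      linarith
    -- decompose f
    set g : E →L[ℝ] ℝ := f.comp (ContinuousLinearMap.inl ℝ E ℝ) with hg
    set s0 : ℝ := f ((0 : E), (1 : ℝ)) with hs0
    have hdecomp : ∀ (x : E) (r : ℝ), f (x, r) = g x + r * s0 := by
      intro x r
      have : (x, r) = ((x, 0) : E × ℝ) + r • ((0 : E), (1 : ℝ)) := by
        simp [Prod.ext_iff]
      rw [this, map_add, map_smul, smul_eq_mul]
      simp [hg, hs0]
    have hs0neg : s0 < 0 := by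
      have hx0f : f ((0 : E), (-1 : ℝ)) = -s0 := by
        have := hdecomp 0 (-1)
        simpa using this
      have := hux
      rw [hx0f] at this
      linarith
    set τ : ℝ := -s0 with hτ
    have hτpos : 0 < τ := by simp [hτ]; linarith
    -- inner product representation of g
    set w : E := (InnerProductSpace.toDual ℝ E).symm g with hw
    have hwrep : ∀ x : E, ⟪w, x⟫ = g x := fun x =>
      InnerProductSpace.toDual_symm_apply
    refine ⟨(-(τ⁻¹)) • w, fun k => ?_⟩
    have hk : f (a k, b k) ≤ 0 :=
      hfle _ (by simpa [hc] using single_mem_nnCone c (some k))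
    rw [hdecomp] at hk
    have hineq : g (a k) ≤ τ * b k := by
      rw [hτ]; linarith
    have : ⟪a k, (-(τ⁻¹)) • w⟫ = -(τ⁻¹) * g (a k) := by
      rw [real_inner_comm, real_inner_smul_left, hwrep]
    rw [this]
    rw [ge_iff_le, ← sub_nonneg]
    have : -(τ⁻¹) * g (a k) + b k - 0 = τ⁻¹ * (τ * b k - g (a k)) := by
      field_simp
      ring
    rw [this]
    have h2 : 0 ≤ τ * b k - g (a k) := by linarith
    exact mul_nonneg (inv_nonneg.mpr hτpos.le) h2
end

section
/- Let α : ℝ → ℝ be a locally Lipschitz class-K function (continuous, strictly increasing, α(0) = 0), let t₀ ∈ ℝ, let ν : ℝ → ℝ satisfy ν(t) ≥ 0 for all t ≥ t₀, and let h : ℝ → ℝ be differentiable on [t₀, ∞) with h(t₀) ≥ 0. If deriv h t ≥ -α(h t) + ν(t) for all t ≥ t₀, then h(t) ≥ 0 for all t ≥ t₀. -/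
/-- Sampled-data barrier condition with a nonnegative margin term `ν`:
strengthening the differential inequality `ḣ ≥ -α(h)` by a nonnegative term
preserves forward invariance of the 0-superlevel set of `h`. -/
theorem cbf_with_margin_nonneg
    (α : ℝ → ℝ) (hα_lip : LocallyLipschitz α) (hα_cont : Continuous α)
    (hα_mono : StrictMono α) (hα_zero : α 0 = 0)
    (t₀ : ℝ) (ν : ℝ → ℝ) (hν : ∀ t ≥ t₀, 0 ≤ ν t)
    (h : ℝ → ℝ)
    (h_diff : ∀ t ∈ Set.Ici t₀, DifferentiableAt ℝ h t)
    (h_init : 0 ≤ h t₀)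
    (h_ineq : ∀ t ≥ t₀, deriv h t ≥ -α (h t) + ν t) :
    ∀ t ≥ t₀, 0 ≤ h t := by
  intro t₁ ht₁
  by_contra hneg
  push_neg at hneg
  set S : Set ℝ := {t | t ∈ Set.Icc t₀ t₁ ∧ 0 ≤ h t} with hS
  have hcontAt : ∀ t ≥ t₀, ContinuousAt h t := fun t ht =>
    (h_diff t ht).continuousAt
  have hSne : S.Nonempty := ⟨t₀, ⟨le_refl _, ht₁⟩, h_init⟩
  have hSbdd : BddAbove S := ⟨t₁, fun x hx => hx.1.2⟩
  set s := sSup S with hs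
  have hsmem₁ : t₀ ≤ s := le_csSup hSbdd ⟨⟨le_refl _, ht₁⟩, h_init⟩
  have hsle : s ≤ t₁ := csSup_le hSne fun x hx => hx.1.2
  have hcl : s ∈ closure S := csSup_mem_closure hSne hSbdd
  have hne : (nhdsWithin s S).NeBot := mem_closure_iff_nhdsWithin_neBot.mp hcl
  have htend : Filter.Tendsto h (nhdsWithin s S) (nhds (h s)) :=
    (hcontAt s hsmem₁).continuousWithinAt
  have hhs : 0 ≤ h s :=
    ge_of_tendsto htend (eventually_nhdsWithin_of_forall fun x hx => hx.2)
  have hslt : s < t₁ := lt_of_le_of_ne hsle fun heq =>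
    absurd hhs (by rw [heq]; exact not_le.mpr hneg)
  have hlt : ∀ t, s < t → t ≤ t₁ → h t < 0 := by
    intro t hst htt₁
    by_contra hge
    push_neg at hge
    have : t ≤ s := le_csSup hSbdd ⟨⟨hsmem₁.trans hst.le, htt₁⟩, hge⟩
    exact absurd hst (not_lt.mpr this)
  have hmono : MonotoneOn h (Set.Icc s t₁) := by
    apply monotoneOn_of_deriv_nonneg (convex_Icc s t₁)
    · intro x hx
      exact (hcontAt x (hsmem₁.trans hx.1)).continuousWithinAt
    · intro x hx
      rw [interior_Icc] at hx
      exact (h_diff x (hsmem₁.trans hx.1.le)).differentiableWithinAt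
    · intro x hx
      rw [interior_Icc] at hx
      have hx₀ : t₀ ≤ x := hsmem₁.trans hx.1.le
      have hhx : h x < 0 := hlt x hx.1 hx.2.le
      have hαx : α (h x) < 0 := by
        calc α (h x) < α 0 := hα_mono hhx
        _ = 0 := hα_zero
      have := h_ineq x hx₀
      linarith [hν x hx₀]
  have := hmono ⟨le_refl _, hslt.le⟩ ⟨hslt.le, le_refl _⟩ hslt.le
  linarith
end
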